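/- arXiv:1812.11701 — 3 statements merged into one kernel-verified Lean document; each statement's English description precedes it below -/
import Mathlib

section
/- Let n ≥ 2 and j₀ ∈ {1, …, n}. Let p_{j₀} = ∞ and let p_j ∈ [1, ∞] for j ≠ j₀, j ∈ {0, 1, …, n}, satisfy ∑_{j=0}^{n} 1/p_j = 1. Then there is no finite constant c such that |Λ^{(n)}(F₀, …, F_n)| ≤ c ∏_{j=0}^{n} ‖F_j‖_{p_j} holds for all tuples of measurable functions F₀, …, F_n on ℝⁿ for which Λ^{(n)} is defined. That is, the estimate (Lp bound) fails whenever one of the exponents p₁, …, p_n equals ∞. -/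
/-!
Take `F_{j₀}` the indicator of the slab `{2a ≤ x_{j₀} ≤ 2}` and every other `F_j` the indicator of
the box `B` of width `a` in direction `e_{j₀}` and width `2` in the others. The integrand vanishes
unless `a ≤ t ≤ 2`, so the principal value exists, and it equals `1` when `x` lies in a box of
volume `a`, `4a ≤ t ≤ 1` and `α ∈ [1/2, 1]^(n-1)`; hence `Λ ≥ 2^(1-n) a log (1/(4a))`.
As `∑_{j ≠ j₀} 1/p_j = 1`, the right-hand side is at most `c |B| = c 2^(n-1) a`, which is
impossible for a fixed `c` as `a → 0`.
-/

open MeasureTheory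

/-- Truncated (at scale `ε`) version of the averaged simplex Hilbert transform form
`Λ^{(n)}(F₀,…,F_n)` in dimension `n = d + 2` (so that `n ≥ 2` automatically):
`∫_{ℝⁿ} ∫_{|t|>ε} ∫_{[0,1]^{n-1}} F₀(x) (∏_{j=1}^{n-1} F_j(x+tα_j e_j)) F_n(x+te_n) dα dt/t dx`,
where `e₁,…,e_n` are the standard unit vectors of `ℝⁿ` (the functions are indexed by `ℕ`;
only the indices `0,…,n` are used). -/
noncomputable def simplexTrunc (d : ℕ) (F : ℕ → (Fin (d + 2) → ℝ) → ℂ) (ε : ℝ) : ℂ :=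
  ∫ x : Fin (d + 2) → ℝ,
    ∫ t in {t : ℝ | ε < |t|},
      (∫ α in (Set.univ.pi fun _ : Fin (d + 1) => Set.Icc (0:ℝ) 1),
        F 0 x *
          (∏ j : Fin (d + 1), F (j.1 + 1) (x + Pi.single j.castSucc (t * α j))) *
          F (d + 2) (x + Pi.single (Fin.last (d + 1)) t)) / (t : ℂ)

/-- `Λ^{(n)}(F₀,…,F_n) = L` in the principal value sense, for `n = d + 2`. -/
def HasSimplexForm (d : ℕ) (F : ℕ → (Fin (d + 2) → ℝ) → ℂ) (L : ℂ) : Prop :=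
  Filter.Tendsto (simplexTrunc d F) (nhdsWithin 0 (Set.Ioi 0)) (nhds L)

open Set
open scoped ENNReal

noncomputable section

lemma ne_zero_of_sum_inv_eq_one {ι : Type*} {s : Finset ι} {p : ι → ℝ≥0∞}
    (hp : ∑ j ∈ s, (p j)⁻¹ = 1) {j : ι} (hj : j ∈ s) : p j ≠ 0 := by
  rw [← ENNReal.inv_ne_top]
  refine ne_top_of_le_ne_top ENNReal.one_ne_top ?_
  exact hp ▸ Finset.single_le_sum (f := fun j => (p j)⁻¹) (fun _ _ => bot_le) hj

lemma prod_rpow_toReal_inv {ι : Type*} {s : Finset ι} {p : ι → ℝ≥0∞}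
    (hp : ∑ j ∈ s, (p j)⁻¹ = 1) {m : ℝ} (hm : 0 < m) :
    ∏ j ∈ s, m ^ ((p j)⁻¹).toReal = m := by
  have hfin : ∀ j ∈ s, (p j)⁻¹ ≠ ⊤ := fun j hj =>
    ENNReal.inv_ne_top.2 (ne_zero_of_sum_inv_eq_one hp hj)
  rw [← Real.rpow_sum_of_pos hm, ← ENNReal.toReal_sum hfin, hp, ENNReal.toReal_one,
    Real.rpow_one]

lemma toReal_eLpNorm_indicator_one {α : Type*} [MeasurableSpace α] {μ : Measure α} {B : Set α}
    (hB : MeasurableSet B) (hB0 : μ B ≠ 0) {p : ℝ≥0∞} (hp : p ≠ 0) :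
    (eLpNorm (B.indicator (1 : α → ℝ)) p μ).toReal = μ.real B ^ (p⁻¹).toReal := by
  rw [show B.indicator (1 : α → ℝ) = B.indicator fun _ => (1 : ℝ) from rfl,
    eLpNorm_indicator_const' hB hB0 hp, enorm_one, one_mul, ← ENNReal.toReal_rpow,
    ENNReal.toReal_inv, one_div, measureReal_def]

lemma prod_toReal_eLpNorm_le {α ι : Type*} [MeasurableSpace α] {μ : Measure α} {s : Finset ι}
    {p : ι → ℝ≥0∞} (hp : ∑ j ∈ s, (p j)⁻¹ = 1) {j₀ : ι} (hpj₀ : p j₀ = ⊤)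
    {F : ι → α → ℝ} {B : Set α} (hB : MeasurableSet B) (hB0 : μ B ≠ 0) (hBtop : μ B ≠ ⊤)
    (hF : ∀ j ∈ s, j ≠ j₀ → F j = B.indicator 1) (hF₀ : ∀ᵐ x ∂μ, ‖F j₀ x‖ ≤ 1) :
    ∏ j ∈ s, (eLpNorm (F j) (p j) μ).toReal ≤ μ.real B := by
  calc ∏ j ∈ s, (eLpNorm (F j) (p j) μ).toReal
      ≤ ∏ j ∈ s, μ.real B ^ ((p j)⁻¹).toReal := by
        refine Finset.prod_le_prod (fun _ _ => ENNReal.toReal_nonneg) fun j hj => ?_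
        by_cases hj₀ : j = j₀
        · subst hj₀
          rw [hpj₀, ENNReal.inv_top, ENNReal.toReal_zero, Real.rpow_zero, eLpNorm_exponent_top]
          exact ENNReal.toReal_le_of_le_ofReal zero_le_one (eLpNormEssSup_le_of_ae_bound hF₀)
        · rw [hF j hj hj₀, toReal_eLpNorm_indicator_one hB hB0 (ne_zero_of_sum_inv_eq_one hp hj)]
    _ = μ.real B := prod_rpow_toReal_inv hp (ENNReal.toReal_pos hB0 hBtop)

section SimplexForm

variable {d : ℕ}

/-- `F_{i+1}` is evaluated at `simplexPoint x t α i`; appending the weight `1` to `α` lets the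
last factor `F_n(x + t e_n)` follow the same pattern as the averaged ones. -/
def simplexPoint (x : Fin (d + 2) → ℝ) (t : ℝ) (α : Fin (d + 1) → ℝ) (i : Fin (d + 2)) :
    Fin (d + 2) → ℝ :=
  x + Pi.single i (t * Fin.snoc (α := fun _ => ℝ) α 1 i)

def simplexIntegrand (f : ℕ → (Fin (d + 2) → ℝ) → ℝ) (x : Fin (d + 2) → ℝ) (t : ℝ)
    (α : Fin (d + 1) → ℝ) : ℝ :=
  f 0 x * ∏ i : Fin (d + 2), f (i.1 + 1) (simplexPoint x t α i)

def unitCube (m : ℕ) : Set (Fin m → ℝ) := univ.pi fun _ => Icc 0 1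

def simplexKernel (f : ℕ → (Fin (d + 2) → ℝ) → ℝ) (x : Fin (d + 2) → ℝ) (t : ℝ) : ℝ :=
  (∫ α in unitCube (d + 1), simplexIntegrand f x t α) / t

lemma simplexPoint_self (x : Fin (d + 2) → ℝ) (t : ℝ) (α : Fin (d + 1) → ℝ) (i : Fin (d + 2)) :
    simplexPoint x t α i i = x i + t * Fin.snoc (α := fun _ => ℝ) α 1 i := by
  simp [simplexPoint]

lemma snoc_one_mem_Icc {l : ℝ} (hl : l ≤ 1) {α : Fin (d + 1) → ℝ} (hα : ∀ j, α j ∈ Icc l 1)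
    (i : Fin (d + 2)) : Fin.snoc (α := fun _ => ℝ) α 1 i ∈ Icc l 1 := by
  induction i using Fin.lastCases with
  | last => simpa using hl
  | cast j => simpa using hα j

lemma simplexTrunc_ofReal (f : ℕ → (Fin (d + 2) → ℝ) → ℝ) (ε : ℝ) :
    simplexTrunc d (fun j y => (f j y : ℂ)) ε =
      ((∫ x, ∫ t in {t : ℝ | ε < |t|}, simplexKernel f x t : ℝ) : ℂ) := by
  rw [simplexTrunc, ← integral_complex_ofReal]
  congr 1; ext x
  rw [← integral_complex_ofReal]
  congr 1; ext t
  rw [simplexKernel, Complex.ofReal_div, ← integral_complex_ofReal]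
  congr 2; ext α
  simp [simplexIntegrand, simplexPoint, Fin.prod_univ_castSucc, mul_assoc]

lemma continuous_simplexPoint (i : Fin (d + 2)) :
    Continuous fun q : ((Fin (d + 2) → ℝ) × ℝ) × (Fin (d + 1) → ℝ) =>
      simplexPoint q.1.1 q.1.2 q.2 i :=
  continuous_fst.fst.add <| (continuous_single i).comp <| continuous_fst.snd.mul <| by fun_prop

lemma measurable_simplexIntegrand {f : ℕ → (Fin (d + 2) → ℝ) → ℝ} (hf : ∀ j, Measurable (f j)) :
    Measurable fun q : ((Fin (d + 2) → ℝ) × ℝ) × (Fin (d + 1) → ℝ) =>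
      simplexIntegrand f q.1.1 q.1.2 q.2 :=
  ((hf 0).comp measurable_fst.fst).mul <| Finset.measurable_prod Finset.univ fun i _ =>
    (hf (i.1 + 1)).comp (continuous_simplexPoint i).measurable

lemma measurable_simplexKernel {f : ℕ → (Fin (d + 2) → ℝ) → ℝ} (hf : ∀ j, Measurable (f j)) :
    Measurable fun q : (Fin (d + 2) → ℝ) × ℝ => simplexKernel f q.1 q.2 :=
  ((measurable_simplexIntegrand hf).stronglyMeasurable.integral_prod_right'
    (ν := volume.restrict (unitCube (d + 1)))).measurable.div measurable_snd

variable {f : ℕ → (Fin (d + 2) → ℝ) → ℝ}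

lemma simplexIntegrand_mem_Icc (hf : ∀ j y, f j y ∈ Icc (0 : ℝ) 1) (x : Fin (d + 2) → ℝ) (t : ℝ)
    (α : Fin (d + 1) → ℝ) : simplexIntegrand f x t α ∈ Icc (0 : ℝ) 1 := by
  have hprod : ∏ i : Fin (d + 2), f (i.1 + 1) (simplexPoint x t α i) ∈ Icc (0 : ℝ) 1 :=
    ⟨Finset.prod_nonneg fun i _ => (hf _ _).1,
      Finset.prod_le_one (fun i _ => (hf _ _).1) fun i _ => (hf _ _).2⟩
  exact ⟨mul_nonneg (hf 0 x).1 hprod.1, mul_le_one₀ (hf 0 x).2 hprod.1 hprod.2⟩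

lemma measurableSet_unitCube (m : ℕ) : MeasurableSet (unitCube m) :=
  MeasurableSet.univ_pi fun _ => measurableSet_Icc

lemma volume_unitCube (m : ℕ) : volume (unitCube m) = 1 := by
  rw [unitCube, volume_pi_pi]
  simp [Real.volume_Icc]

lemma simplexKernel_nonneg (hf : ∀ j y, f j y ∈ Icc (0 : ℝ) 1) (x : Fin (d + 2) → ℝ) {t : ℝ}
    (ht : 0 ≤ t) : 0 ≤ simplexKernel f x t :=
  div_nonneg (setIntegral_nonneg (measurableSet_unitCube _)
    fun α _ => (simplexIntegrand_mem_Icc hf x t α).1) ht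

lemma norm_simplexKernel_le (hf : ∀ j y, f j y ∈ Icc (0 : ℝ) 1) (x : Fin (d + 2) → ℝ)
    {s t : ℝ} (hs : 0 < s) (hst : s ≤ t) : ‖simplexKernel f x t‖ ≤ s⁻¹ := by
  have ht : 0 < t := hs.trans_le hst
  rw [Real.norm_of_nonneg (simplexKernel_nonneg hf x ht.le), simplexKernel, div_eq_mul_inv]
  refine (mul_le_of_le_one_left (inv_nonneg.2 ht.le) ?_).trans (inv_anti₀ hs hst)
  have := norm_setIntegral_le_of_norm_le_const (μ := volume) (s := unitCube (d + 1)) (C := 1)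
    (by simp [volume_unitCube]) fun α _ =>
      (Real.norm_of_nonneg (simplexIntegrand_mem_Icc hf x t α).1).trans_le
        (simplexIntegrand_mem_Icc hf x t α).2
  simpa [measureReal_def, volume_unitCube] using (le_abs_self _).trans this

lemma integrableOn_simplexIntegrand (hf_meas : ∀ j, Measurable (f j))
    (hf : ∀ j y, f j y ∈ Icc (0 : ℝ) 1) (x : Fin (d + 2) → ℝ) (t : ℝ) :
    IntegrableOn (simplexIntegrand f x t) (unitCube (d + 1)) :=
  IntegrableOn.of_bound (by simp [volume_unitCube])
    ((measurable_simplexIntegrand hf_meas).comp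
      (measurable_prodMk_left (x := (x, t)))).aestronglyMeasurable 1
    (ae_of_all _ fun α => (Real.norm_of_nonneg (simplexIntegrand_mem_Icc hf x t α).1).trans_le
      (simplexIntegrand_mem_Icc hf x t α).2)

end SimplexForm

namespace SimplexCounterexample

variable {d : ℕ} (k : Fin (d + 2)) (a b : ℝ)

def box : Set (Fin (d + 2) → ℝ) := univ.pi fun i => if i = k then Icc 0 a else Icc 0 b

def slab : Set (Fin (d + 2) → ℝ) := {y | y k ∈ Icc (2 * a) 2}

def testFun (j : ℕ) : (Fin (d + 2) → ℝ) → ℝ :=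
  (if j = k.1 + 1 then slab k a else box k a 2).indicator 1

def testForm : ℝ := ∫ x, ∫ t in Icc a 2, simplexKernel (testFun k a) x t

variable {k a b}

lemma measurableSet_box : MeasurableSet (box k a b) :=
  MeasurableSet.univ_pi fun i => by split_ifs <;> exact measurableSet_Icc

lemma measurableSet_slab : MeasurableSet (slab k a) :=
  measurable_pi_apply k measurableSet_Icc

lemma volume_box_lt_top : volume (box k a b) < ⊤ :=
  (isCompact_univ_pi fun i => by split_ifs <;> exact isCompact_Icc).measure_lt_top

lemma volume_box (ha : 0 ≤ a) (hb : 0 ≤ b) :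
    volume (box k a b) = ENNReal.ofReal (a * b ^ (d + 1)) := by
  rw [box, volume_pi_pi, Fin.prod_univ_succAbove _ k, if_pos rfl]
  simp only [Fin.succAbove_ne, if_false, Real.volume_Icc, sub_zero, Finset.prod_const,
    Finset.card_univ, Fintype.card_fin]
  rw [ENNReal.ofReal_mul ha, ENNReal.ofReal_pow hb]

lemma mem_box {y : Fin (d + 2) → ℝ} :
    y ∈ box k a b ↔ y k ∈ Icc 0 a ∧ ∀ i, i ≠ k → y i ∈ Icc 0 b := by
  refine ⟨fun h => ⟨by simpa using h k (mem_univ k), fun i hi => by simpa [hi] using h i trivial⟩,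
    fun h i _ => ?_⟩
  by_cases hi : i = k
  · subst hi; simpa using h.1
  · simpa [hi] using h.2 i hi

lemma nonneg_of_mem_box {y : Fin (d + 2) → ℝ} (hy : y ∈ box k a b) (i : Fin (d + 2)) :
    0 ≤ y i := by
  by_cases hi : i = k
  · subst hi; exact (mem_box.1 hy).1.1
  · exact ((mem_box.1 hy).2 i hi).1

lemma apply_le_two_of_mem {y : Fin (d + 2) → ℝ} {i : Fin (d + 2)}
    (hy : y ∈ if i = k then slab k a else box k a 2) : y i ≤ 2 := by
  split_ifs at hy with hik
  · subst hik; exact hy.2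
  · exact ((mem_box.1 hy).2 i hik).2

lemma box_subset_box {b' : ℝ} (hb : b ≤ b') : box k a b ⊆ box k a b' :=
  pi_mono fun i _ => by split_ifs <;> simp [Icc_subset_Icc_right hb]

lemma add_single_mem_box {x : Fin (d + 2) → ℝ} (hx : x ∈ box k a 1) {i : Fin (d + 2)} (hik : i ≠ k)
    {s : ℝ} (hs : s ∈ Icc (0 : ℝ) 1) : x + Pi.single i s ∈ box k a 2 := by
  obtain ⟨hxk, hxi⟩ := mem_box.1 hx
  refine mem_box.2 ⟨by simpa [Pi.single_eq_of_ne' hik] using hxk, fun i' hi' => ?_⟩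
  by_cases hii' : i' = i
  · subst hii'
    simp only [Pi.add_apply, Pi.single_eq_same]
    constructor <;> linarith [(hxi i' hi').1, (hxi i' hi').2, hs.1, hs.2]
  · simp only [Pi.add_apply, Pi.single_eq_of_ne hii', add_zero]
    exact Icc_subset_Icc_right one_le_two (hxi i' hi')

lemma testFun_of_ne {j : ℕ} (hj : j ≠ k.1 + 1) : testFun k a j = (box k a 2).indicator 1 := by
  simp [testFun, hj]

lemma testFun_succ (i : Fin (d + 2)) :
    testFun k a (i.1 + 1) = (if i = k then slab k a else box k a 2).indicator 1 := by
  simp [testFun, Fin.val_inj]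

lemma testFun_mem_Icc (j : ℕ) (y : Fin (d + 2) → ℝ) : testFun k a j y ∈ Icc (0 : ℝ) 1 := by
  classical
  rw [testFun, indicator_apply]
  split_ifs <;> simp

lemma measurable_testFun (j : ℕ) : Measurable (testFun k a j) :=
  measurable_one.indicator (by split_ifs; exacts [measurableSet_slab, measurableSet_box])

lemma mem_box_and_mem_Icc_of_simplexIntegrand_ne_zero (ha : 0 < a) {x : Fin (d + 2) → ℝ}
    {t : ℝ} {α : Fin (d + 1) → ℝ} (hα : α ∈ unitCube (d + 1))
    (h : simplexIntegrand (testFun k a) x t α ≠ 0) : x ∈ box k a 2 ∧ t ∈ Icc a 2 := by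
  simp only [simplexIntegrand, mul_ne_zero_iff, Finset.prod_ne_zero_iff, Finset.mem_univ,
    forall_true_left] at h
  obtain ⟨h0, hprod⟩ := h
  have hx : x ∈ box k a 2 := by
    rw [testFun_of_ne (by omega)] at h0
    exact mem_of_indicator_ne_zero h0
  have hmem : ∀ i, simplexPoint x t α i ∈ if i = k then slab k a else box k a 2 := fun i =>
    mem_of_indicator_ne_zero (by simpa only [testFun_succ] using hprod i)
  have hslab : x k + t * Fin.snoc (α := fun _ => ℝ) α 1 k ∈ Icc (2 * a) 2 := by
    simpa [slab, simplexPoint_self] using hmem k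
  have hxk : x k ∈ Icc 0 a := (mem_box.1 hx).1
  have hβ := snoc_one_mem_Icc zero_le_one (fun j => hα j (mem_univ j)) k
  have hlast : x (Fin.last _) + t ≤ 2 := by
    simpa [simplexPoint_self] using apply_le_two_of_mem (hmem (Fin.last _))
  have htpos : 0 < t := by
    by_contra! ht
    nlinarith [hslab.1, hxk.2, hβ.1]
  refine ⟨hx, ?_, by linarith [nonneg_of_mem_box hx (Fin.last _)]⟩
  nlinarith [hslab.1, hxk.2, hβ.2]

lemma simplexIntegrand_testFun_eq_one (ha : 0 ≤ a) (ha' : a ≤ 1 / 4) {x : Fin (d + 2) → ℝ}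
    (hx : x ∈ box k a 1) {t : ℝ} (ht : t ∈ Icc (4 * a) 1) {α : Fin (d + 1) → ℝ}
    (hα : α ∈ univ.pi fun _ => Icc (1 / 2 : ℝ) 1) :
    simplexIntegrand (testFun k a) x t α = 1 := by
  have hs : ∀ i, t * Fin.snoc (α := fun _ => ℝ) α 1 i ∈ Icc (2 * a) 1 := fun i => by
    obtain ⟨h1, h2⟩ := snoc_one_mem_Icc (by norm_num) (fun j => hα j (mem_univ j)) i
    constructor <;> nlinarith [ht.1, ht.2]
  rw [simplexIntegrand, testFun_of_ne (by omega),
    indicator_of_mem (box_subset_box one_le_two hx), Finset.prod_eq_one fun i _ => ?_, mul_one,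
    Pi.one_apply]
  rw [testFun_succ]
  refine indicator_of_mem ?_ _
  split_ifs with hik
  · subst hik
    have hxi : x i ∈ Icc 0 a := (mem_box.1 hx).1
    show simplexPoint x t α i i ∈ Icc (2 * a) 2
    rw [simplexPoint_self]
    constructor <;> linarith [hxi.1, hxi.2, (hs i).1, (hs i).2]
  · exact add_single_mem_box hx hik ⟨by linarith [(hs i).1], (hs i).2⟩

lemma simplexKernel_testFun_eq_zero (ha : 0 < a) {x : Fin (d + 2) → ℝ} {t : ℝ}
    (h : ¬ (x ∈ box k a 2 ∧ t ∈ Icc a 2)) : simplexKernel (testFun k a) x t = 0 := by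
  rw [simplexKernel, setIntegral_congr_fun (measurableSet_unitCube _) (g := fun _ => 0)
    fun α hα => ?_, integral_zero, zero_div]
  by_contra hne
  exact h (mem_box_and_mem_Icc_of_simplexIntegrand_ne_zero ha hα hne)

lemma half_pow_mul_inv_le_simplexKernel (ha : 0 < a) (ha' : a ≤ 1 / 4) {x : Fin (d + 2) → ℝ}
    (hx : x ∈ box k a 1) {t : ℝ} (ht : t ∈ Icc (4 * a) 1) :
    (1 / 2 : ℝ) ^ (d + 1) * t⁻¹ ≤ simplexKernel (testFun k a) x t := by
  have htpos : 0 < t := by linarith [ht.1]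
  have hhalf : MeasurableSet (univ.pi fun _ : Fin (d + 1) => Icc (1 / 2 : ℝ) 1) :=
    MeasurableSet.univ_pi fun _ => measurableSet_Icc
  rw [simplexKernel, div_eq_mul_inv]
  refine mul_le_mul_of_nonneg_right ?_ (inv_nonneg.2 htpos.le)
  calc (1 / 2 : ℝ) ^ (d + 1)
      = ∫ α in univ.pi fun _ : Fin (d + 1) => Icc (1 / 2 : ℝ) 1,
          simplexIntegrand (testFun k a) x t α := by
        rw [setIntegral_congr_fun hhalf fun α hα =>
          simplexIntegrand_testFun_eq_one ha.le ha' hx ht hα, setIntegral_const, smul_eq_mul,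
          mul_one, measureReal_def, volume_pi_pi]
        norm_num [Real.volume_Icc]
    _ ≤ ∫ α in unitCube (d + 1), simplexIntegrand (testFun k a) x t α :=
        setIntegral_mono_set
          (integrableOn_simplexIntegrand measurable_testFun testFun_mem_Icc x t)
          (ae_of_all _ fun α => (simplexIntegrand_mem_Icc testFun_mem_Icc x t α).1)
          (pi_mono fun _ _ => Icc_subset_Icc (by norm_num) le_rfl).eventuallyLE

lemma integrableOn_simplexKernel_testFun (ha : 0 < a) (x : Fin (d + 2) → ℝ) :
    IntegrableOn (simplexKernel (testFun k a) x) (Icc a 2) :=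
  IntegrableOn.of_bound measure_Icc_lt_top
    ((measurable_simplexKernel measurable_testFun).comp
      (measurable_prodMk_left (x := x))).aestronglyMeasurable a⁻¹
    (ae_restrict_of_forall_mem measurableSet_Icc fun _ ht =>
      norm_simplexKernel_le testFun_mem_Icc x ha ht.1)

lemma integrable_setIntegral_simplexKernel_testFun (ha : 0 < a) :
    Integrable fun x => ∫ t in Icc a 2, simplexKernel (testFun k a) x t := by
  have hsupp :
      (Function.support fun x => ∫ t in Icc a 2, simplexKernel (testFun k a) x t) ⊆ box k a 2 :=
    fun x hx => by
      by_contra hxb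
      refine hx (setIntegral_eq_zero_of_forall_eq_zero fun t _ => ?_)
      exact simplexKernel_testFun_eq_zero ha fun h => hxb h.1
  rw [← integrableOn_iff_integrable_of_support_subset hsupp]
  refine IntegrableOn.of_bound volume_box_lt_top
    ((measurable_simplexKernel measurable_testFun).stronglyMeasurable.integral_prod_right'
      (ν := volume.restrict (Icc a 2))).aestronglyMeasurable
    (a⁻¹ * volume.real (Icc a (2 : ℝ))) (ae_of_all _ fun x => ?_)
  exact norm_setIntegral_le_of_norm_le_const measure_Icc_lt_top fun _ ht =>
    norm_simplexKernel_le testFun_mem_Icc x ha ht.1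

lemma half_pow_mul_log_le_setIntegral_simplexKernel (ha : 0 < a) (ha' : a ≤ 1 / 4)
    {x : Fin (d + 2) → ℝ} (hx : x ∈ box k a 1) :
    (1 / 2 : ℝ) ^ (d + 1) * Real.log (1 / (4 * a)) ≤
      ∫ t in Icc a 2, simplexKernel (testFun k a) x t := by
  have h4a : 0 < 4 * a := by positivity
  have hsub : Icc (4 * a) 1 ⊆ Icc a 2 := Icc_subset_Icc (by linarith) one_le_two
  calc (1 / 2 : ℝ) ^ (d + 1) * Real.log (1 / (4 * a))
      = ∫ t in Icc (4 * a) 1, (1 / 2 : ℝ) ^ (d + 1) * t⁻¹ := by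
        rw [integral_Icc_eq_integral_Ioc, ← intervalIntegral.integral_of_le (by linarith),
          intervalIntegral.integral_const_mul, integral_inv]
        rw [uIcc_of_le (by linarith)]
        exact fun h => h4a.not_ge h.1
    _ ≤ ∫ t in Icc (4 * a) 1, simplexKernel (testFun k a) x t :=
        setIntegral_mono_on
          (continuousOn_const.mul (continuousOn_inv₀.mono fun t ht =>
            (h4a.trans_le ht.1).ne')).integrableOn_Icc
          ((integrableOn_simplexKernel_testFun ha x).mono_set hsub) measurableSet_Icc
          fun t ht => half_pow_mul_inv_le_simplexKernel ha ha' hx ht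
    _ ≤ ∫ t in Icc a 2, simplexKernel (testFun k a) x t :=
        setIntegral_mono_set (integrableOn_simplexKernel_testFun ha x)
          (ae_restrict_of_forall_mem measurableSet_Icc fun t ht =>
            simplexKernel_nonneg testFun_mem_Icc x (ha.le.trans ht.1))
          hsub.eventuallyLE

lemma log_div_le_testForm (ha : 0 < a) (ha' : a ≤ 1 / 4) :
    a * Real.log (1 / (4 * a)) / 2 ^ (d + 1) ≤ testForm k a := by
  have hint := integrable_setIntegral_simplexKernel_testFun (k := k) ha
  calc a * Real.log (1 / (4 * a)) / 2 ^ (d + 1)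
      = ∫ _ in box k a 1, (1 / 2 : ℝ) ^ (d + 1) * Real.log (1 / (4 * a)) := by
        rw [setIntegral_const, smul_eq_mul, measureReal_def, volume_box ha.le zero_le_one,
          one_pow, mul_one, ENNReal.toReal_ofReal ha.le, one_div_pow]
        ring
    _ ≤ ∫ x in box k a 1, ∫ t in Icc a 2, simplexKernel (testFun k a) x t :=
        setIntegral_mono_on (integrableOn_const volume_box_lt_top.ne) hint.integrableOn
          measurableSet_box fun x hx => half_pow_mul_log_le_setIntegral_simplexKernel ha ha' hx
    _ ≤ testForm k a :=
        setIntegral_le_integral hint <| ae_of_all _ fun x =>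
          setIntegral_nonneg measurableSet_Icc fun t ht =>
            simplexKernel_nonneg testFun_mem_Icc x (ha.le.trans ht.1)

lemma simplexTrunc_testFun (ha : 0 < a) {ε : ℝ} (hε : ε < a) :
    simplexTrunc d (fun j y => (testFun k a j y : ℂ)) ε = testForm k a := by
  rw [simplexTrunc_ofReal, testForm]
  congr 2; ext x
  exact setIntegral_eq_of_subset_of_forall_sdiff_eq_zero
    (measurableSet_lt measurable_const measurable_abs)
    (fun t ht => hε.trans_le (ht.1.trans (le_abs_self t)))
    fun t ht => simplexKernel_testFun_eq_zero ha fun h => ht.2 h.2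

lemma hasSimplexForm_testFun (ha : 0 < a) :
    HasSimplexForm d (fun j y => (testFun k a j y : ℂ)) (testForm k a) := by
  refine tendsto_const_nhds.congr' ?_
  filter_upwards [Ioo_mem_nhdsGT ha] with ε hε
  exact (simplexTrunc_testFun ha hε.2).symm

lemma memLp_testFun {p : ℕ → ℝ≥0∞} (hp : p (k.1 + 1) = ⊤) (j : ℕ) :
    MemLp (testFun k a j) (p j) volume := by
  by_cases hj : j = k.1 + 1
  · subst hj
    rw [hp]
    exact memLp_top_of_bound (measurable_testFun _).aestronglyMeasurable 1 <| ae_of_all _ fun y =>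
      (Real.norm_of_nonneg (testFun_mem_Icc _ y).1).trans_le (testFun_mem_Icc _ y).2
  · rw [testFun_of_ne hj]
    exact memLp_indicator_const _ measurableSet_box 1 (Or.inr volume_box_lt_top.ne)

lemma prod_eLpNorm_testFun_le (ha : 0 < a) {p : ℕ → ℝ≥0∞} (hp : p (k.1 + 1) = ⊤)
    (hsum : ∑ j ∈ Finset.range (d + 3), (p j)⁻¹ = 1) :
    ∏ j ∈ Finset.range (d + 3), (eLpNorm (fun y => (testFun k a j y : ℂ)) (p j) volume).toReal
      ≤ a * 2 ^ (d + 1) := by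
  have hnorm : ∀ j, eLpNorm (fun y => (testFun k a j y : ℂ)) (p j) volume =
      eLpNorm (testFun k a j) (p j) volume := fun j =>
    eLpNorm_congr_norm_ae (ae_of_all _ fun y => Complex.norm_real _)
  have hvol := volume_box (k := k) ha.le zero_le_two
  simp only [hnorm]
  calc _ ≤ volume.real (box k a 2) :=
        prod_toReal_eLpNorm_le hsum hp measurableSet_box
          (by rw [hvol]; exact (ENNReal.ofReal_pos.2 (by positivity)).ne') volume_box_lt_top.ne
          (fun j _ hj => testFun_of_ne hj) <| ae_of_all _ fun y =>
            (Real.norm_of_nonneg (testFun_mem_Icc _ y).1).trans_le (testFun_mem_Icc _ y).2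
    _ = a * 2 ^ (d + 1) := by rw [measureReal_def, hvol, ENNReal.toReal_ofReal (by positivity)]

end SimplexCounterexample

end

open SimplexCounterexample in
theorem endpoint_estimate_fails_general
    (d : ℕ) (j₀ : ℕ) (hj₀ : 1 ≤ j₀) (hj₀' : j₀ ≤ d + 2)
    (p : ℕ → ENNReal) (hpj₀ : p j₀ = ⊤)
    (hsum : ∑ j ∈ Finset.range (d + 3), (p j)⁻¹ = 1) :
    ¬ ∃ c : ℝ,
      ∀ F : ℕ → (Fin (d + 2) → ℝ) → ℂ,
        (∀ j ≤ d + 2, MemLp (F j) (p j) volume) →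
        ∀ L : ℂ, HasSimplexForm d F L →
          ‖L‖ ≤ c * ∏ j ∈ Finset.range (d + 3), (eLpNorm (F j) (p j) volume).toReal := by
  rintro ⟨c, hc⟩
  obtain ⟨k, rfl⟩ : ∃ k : Fin (d + 2), k.1 + 1 = j₀ := ⟨⟨j₀ - 1, by omega⟩, by simp; omega⟩
  obtain ⟨M, hcM, hM⟩ : ∃ M : ℝ, max c 0 * 4 ^ (d + 1) < M ∧ 0 ≤ M :=
    ⟨max c 0 * 4 ^ (d + 1) + 1, by linarith, by positivity⟩
  set a := Real.exp (-M) / 4 with ha_def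
  have ha : 0 < a := by positivity
  have ha' : a ≤ 1 / 4 :=
    div_le_div_of_nonneg_right (Real.exp_le_one_iff.2 (neg_nonpos.2 hM)) zero_le_four
  have hlog : Real.log (1 / (4 * a)) = M := by
    rw [ha_def, mul_div_cancel₀ _ four_ne_zero, one_div, ← Real.exp_neg, neg_neg, Real.log_exp]
  have hbound : a * M / 2 ^ (d + 1) ≤ max c 0 * (a * 2 ^ (d + 1)) :=
    calc a * M / 2 ^ (d + 1) ≤ testForm k a := hlog ▸ log_div_le_testForm ha ha'
      _ ≤ ‖(testForm k a : ℂ)‖ := by rw [Complex.norm_real]; exact le_abs_self _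
      _ ≤ c * ∏ j ∈ Finset.range (d + 3),
            (eLpNorm (fun y => (testFun k a j y : ℂ)) (p j) volume).toReal :=
          hc _ (fun j _ => (memLp_testFun hpj₀ j).ofReal) _ (hasSimplexForm_testFun ha)
      _ ≤ max c 0 * (a * 2 ^ (d + 1)) :=
          mul_le_mul (le_max_left _ _) (prod_eLpNorm_testFun_le ha hpj₀ hsum)
            (Finset.prod_nonneg fun _ _ => ENNReal.toReal_nonneg) (le_max_right _ _)
  rw [div_le_iff₀ (by positivity)] at hbound
  have : M ≤ max c 0 * 4 ^ (d + 1) := by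
    rw [show (4 : ℝ) ^ (d + 1) = 2 ^ (d + 1) * 2 ^ (d + 1) by rw [← mul_pow]; norm_num]
    nlinarith
  linarith

/-- **Endpoint counterexample.** Let `n = d + 2 ≥ 2` and `j₀ ∈ {1,…,n}`. If `p_{j₀} = ∞`
and the exponents `p_j ∈ [1,∞]` satisfy `∑_{j=0}^n 1/p_j = 1`, then there is no finite
constant `c` such that `|Λ^{(n)}(F₀,…,F_n)| ≤ c ∏_{j=0}^n ‖F_j‖_{p_j}` holds for all
tuples of functions `F_j ∈ L^{p_j}(ℝⁿ)` for which the form `Λ^{(n)}` is defined. -/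
theorem endpoint_estimate_fails
    (d : ℕ) (j₀ : ℕ) (hj₀ : 1 ≤ j₀) (hj₀' : j₀ ≤ d + 2)
    (p : ℕ → ENNReal) (hpj₀ : p j₀ = ⊤)
    (hp : ∀ j ≤ d + 2, 1 ≤ p j)
    (hsum : ∑ j ∈ Finset.range (d + 3), (p j)⁻¹ = 1) :
    ¬ ∃ c : ℝ,
      ∀ F : ℕ → (Fin (d + 2) → ℝ) → ℂ,
        (∀ j ≤ d + 2, MemLp (F j) (p j) volume) →
        ∀ L : ℂ, HasSimplexForm d F L →
          ‖L‖ ≤ c * ∏ j ∈ Finset.range (d + 3), (eLpNorm (F j) (p j) volume).toReal :=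
  endpoint_estimate_fails_general d j₀ hj₀ hj₀' p hpj₀ hsum
end

section
/- Let n ≥ 2 and let ξ = (ξ₁, …, ξ_n) ∈ ℝⁿ with ξ₁, …, ξ_{n-1} all nonzero. Then μ_n(ξ) = (c_n / (ξ₁ ⋯ ξ_{n-1})) ∑_{α ∈ {0,1}^{n-1}} (−1)^{|α|} g_n(ξ_n + ∑_{j=1}^{n-1} α_j ξ_j), where g_n(t) = |t| t^{n-2}, c_n = (−1)^{n+1}/(n−1)!, and |α| = α₁ + ⋯ + α_{n-1}. -/
/-!
For `k ≥ 1` the function `S_k(t) = sgn(t) tᵏ / k! = |t| t^{k-1} / k!` is continuous and has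
derivative `S_{k-1}` off `0`, so it is a primitive of `S_{k-1}` (with `S_0 = sgn`). Hence for
`a ≠ 0` the integral of `S_k(x a + c)` over `x ∈ [0, 1]` is `a⁻¹ (S_{k+1}(c + a) - S_{k+1}(c))`.
Integrating out `α₁, …, α_{n-1}` one at a time by Fubini turns `μ_n(ξ) = ∫ S_0` into
`(ξ₁ ⋯ ξ_{n-1})⁻¹ Δ_{ξ₁} ⋯ Δ_{ξ_{n-1}} S_{n-1}(ξ_n)`, and expanding the iterated forward
difference gives the signed sum over the vertices of `{0,1}^{n-1}`.
-/

open MeasureTheory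

/-- The symbol `μ_n` in dimension `n = m + 1`:
`μ_n(ξ) = ∫_{[0,1]^{n-1}} sgn(α₁ξ₁ + ⋯ + α_{n-1}ξ_{n-1} + ξ_n) dα`. -/
noncomputable def muSymbol (m : ℕ) (ξ : Fin (m + 1) → ℝ) : ℝ :=
  ∫ α in (Set.univ.pi fun _ : Fin m => Set.Icc (0:ℝ) 1),
    Real.sign ((∑ j : Fin m, α j * ξ j.castSucc) + ξ (Fin.last m))

open Set Topology Finset
open scoped Nat

namespace Real

theorem monotone_sign : Monotone Real.sign := by
  intro a b hab
  rcases lt_trichotomy a 0 with ha | rfl | ha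
  · rw [sign_of_neg ha]
    rcases sign_apply_eq b with h | h | h <;> rw [h] <;> norm_num
  · rcases lt_trichotomy b 0 with hb | rfl | hb
    · exact absurd hab hb.not_ge
    · rfl
    · rw [sign_zero, sign_of_pos hb]; norm_num
  · rw [sign_of_pos ha, sign_of_pos (ha.trans_le hab)]

theorem sign_mul_self (r : ℝ) : sign r * r = |r| := by
  rcases lt_trichotomy r 0 with hr | rfl | hr
  · rw [sign_of_neg hr, abs_of_neg hr]; ring
  · simp
  · rw [sign_of_pos hr, abs_of_pos hr, one_mul]

theorem sign_eventuallyEq {x : ℝ} (hx : x ≠ 0) : sign =ᶠ[𝓝 x] fun _ => sign x := by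
  rcases hx.lt_or_gt with hx | hx
  · filter_upwards [eventually_lt_nhds hx] with t ht
    rw [sign_of_neg ht, sign_of_neg hx]
  · filter_upwards [eventually_gt_nhds hx] with t ht
    rw [sign_of_pos ht, sign_of_pos hx]

end Real

noncomputable def signPrimitive (k : ℕ) (t : ℝ) : ℝ := Real.sign t * t ^ k / k !

theorem signPrimitive_zero : signPrimitive 0 = Real.sign := by
  ext t; simp [signPrimitive]

theorem signPrimitive_succ (k : ℕ) (t : ℝ) :
    signPrimitive (k + 1) t = |t| * t ^ k / (k + 1)! := by
  rw [signPrimitive, pow_succ', ← mul_assoc, Real.sign_mul_self]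

theorem continuous_signPrimitive_succ (k : ℕ) : Continuous (signPrimitive (k + 1)) := by
  simp_rw [funext (signPrimitive_succ k)]
  fun_prop

theorem hasDerivAt_signPrimitive (k : ℕ) {x : ℝ} (hx : x ≠ 0) :
    HasDerivAt (signPrimitive (k + 1)) (signPrimitive k x) x := by
  have hpoly : HasDerivAt (fun t => Real.sign x * t ^ (k + 1) / (k + 1)!)
      (Real.sign x * ((k + 1 : ℕ) * x ^ k) / (k + 1)!) x :=
    ((hasDerivAt_pow (k + 1) x).const_mul _).div_const _
  have hfac : ((k + 1)! : ℝ) = (k + 1 : ℕ) * k ! := by push_cast [Nat.factorial_succ]; ring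
  refine (hpoly.congr_of_eventuallyEq ?_).congr_deriv ?_
  · filter_upwards [Real.sign_eventuallyEq hx] with t ht
    rw [signPrimitive, ht]
  · rw [signPrimitive, hfac, mul_left_comm, mul_div_mul_left _ _ (by positivity)]

theorem intervalIntegrable_signPrimitive (k : ℕ) (a b : ℝ) :
    IntervalIntegrable (signPrimitive k) volume a b :=
  (Real.monotone_sign.intervalIntegrable.mul_continuousOn
    (continuous_pow k).continuousOn).div_const _

theorem integral_signPrimitive (k : ℕ) (a b : ℝ) :
    ∫ t in a..b, signPrimitive k t = signPrimitive (k + 1) b - signPrimitive (k + 1) a :=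
  integral_eq_of_hasDerivAt_off_countable _ _ (countable_singleton 0)
    (continuous_signPrimitive_succ k).continuousOn
    (fun _ hx => hasDerivAt_signPrimitive k hx.2)
    (intervalIntegrable_signPrimitive k a b)

theorem integral_Icc_signPrimitive_mul_add (k : ℕ) {a : ℝ} (ha : a ≠ 0) (c : ℝ) :
    ∫ x in Icc (0 : ℝ) 1, signPrimitive k (x * a + c) =
      a⁻¹ * fwdDiff a (signPrimitive (k + 1)) c := by
  rw [integral_Icc_eq_integral_Ioc, ← intervalIntegral.integral_of_le zero_le_one]
  simp_rw [mul_comm _ a]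
  rw [intervalIntegral.integral_comp_mul_add _ ha, integral_signPrimitive, smul_eq_mul, fwdDiff]
  simp only [mul_zero, mul_one, zero_add, add_comm a c]

theorem integrableOn_signPrimitive_comp {X : Type*} [TopologicalSpace X] [T2Space X]
    [MeasurableSpace X] [OpensMeasurableSpace X] {μ : Measure X} [IsFiniteMeasureOnCompacts μ]
    {K : Set X} (hK : IsCompact K) (k : ℕ) {g : X → ℝ} (hg : Continuous g) :
    IntegrableOn (fun x => signPrimitive k (g x)) K μ := by
  have hsign : IntegrableOn (fun x => Real.sign (g x)) K μ :=
    Measure.integrableOn_of_bounded hK.measure_lt_top.ne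
      (Real.monotone_sign.measurable.comp hg.measurable).aestronglyMeasurable (M := 1)
      (ae_of_all _ fun x => by rcases Real.sign_apply_eq (g x) with h | h | h <;> simp [h])
  exact (hsign.mul_continuousOn (hg.pow k).continuousOn hK).div_const _

def multiFwdDiff {M G : Type*} [AddCommMonoid M] [AddCommGroup G] :
    {m : ℕ} → (Fin m → M) → (M → G) → M → G
  | 0, _, f => f
  | _ + 1, h, f => fwdDiff (h 0) (multiFwdDiff (Fin.tail h) f)

theorem multiFwdDiff_eq_sum {M G : Type*} [AddCommMonoid M] [AddCommGroup G] {m : ℕ}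
    (h : Fin m → M) (f : M → G) (x : M) :
    multiFwdDiff h f x = (-1 : ℤ) ^ m • ∑ α : Fin m → Bool,
      (-1 : ℤ) ^ (∑ j, if α j then 1 else 0 : ℕ) • f (x + ∑ j, if α j then h j else 0) := by
  induction m generalizing x with
  | zero => simp [multiFwdDiff]
  | succ m ih =>
    rw [← (Fin.consEquiv fun _ => Bool).sum_comp, Fintype.sum_prod_type, Fintype.sum_bool]
    simp only [multiFwdDiff, fwdDiff, ih, Fin.consEquiv_apply, Fin.sum_univ_succ, Fin.cons_zero,
      Fin.cons_succ, Fin.tail, if_true, if_false, Bool.false_eq_true, zero_add, add_assoc]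
    rw [pow_succ, mul_smul, ← smul_sub]
    congr 1
    simp only [pow_add, pow_one, mul_smul, neg_smul, one_smul, sum_neg_distrib]
    abel

theorem setIntegral_univ_pi_succ {E : Type*} [NormedAddCommGroup E] [NormedSpace ℝ E] {m : ℕ}
    (s : Fin (m + 1) → Set ℝ) {f : (Fin (m + 1) → ℝ) → E} (hf : IntegrableOn f (univ.pi s)) :
    ∫ y in univ.pi s, f y =
      ∫ y in univ.pi (fun j => s j.succ), ∫ x in s 0, f (Fin.cons x y) := by
  let e := MeasurableEquiv.piFinSuccAbove (fun _ : Fin (m + 1) => ℝ) 0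
  have he : MeasurePreserving e.symm (volume.prod volume) volume :=
    (volume_preserving_piFinSuccAbove (fun _ : Fin (m + 1) => ℝ) 0).symm
  have hpre : e.symm ⁻¹' univ.pi s = s 0 ×ˢ univ.pi fun j => s j.succ := by
    ext ⟨x, y⟩
    simp [e, Fin.forall_fin_succ]
  have hcons : ∀ p : ℝ × (Fin m → ℝ), e.symm p = Fin.cons p.1 p.2 := fun p => by
    simp [e, Fin.insertNthEquiv]
  rw [← he.setIntegral_preimage_emb e.symm.measurableEmbedding, hpre, ← Measure.prod_restrict,
    integral_prod_symm]
  · simp only [hcons]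
  · rw [Measure.prod_restrict, ← IntegrableOn, ← hpre]
    exact (he.integrableOn_comp_preimage e.symm.measurableEmbedding).2 hf

theorem setIntegral_univ_pi_Icc_signPrimitive {m : ℕ} (k : ℕ) {w : Fin m → ℝ}
    (hw : ∀ j, w j ≠ 0) (c : ℝ) :
    ∫ y in univ.pi fun _ => Icc (0 : ℝ) 1, signPrimitive k (∑ j, y j * w j + c) =
      (∏ j, w j)⁻¹ * multiFwdDiff w (signPrimitive (k + m)) c := by
  induction m generalizing k c with
  | zero => simp [multiFwdDiff, measureReal_def, Real.volume_Icc_pi]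
  | succ m ih =>
    have hcube : IsCompact (univ.pi fun _ : Fin m => Icc (0 : ℝ) 1) :=
      isCompact_univ_pi fun _ => isCompact_Icc
    have hint : ∀ c', IntegrableOn
        (fun y => signPrimitive (k + 1) (∑ j : Fin m, y j * w j.succ + c'))
        (univ.pi fun _ => Icc (0 : ℝ) 1) :=
      fun c' => integrableOn_signPrimitive_comp hcube _ (by fun_prop)
    rw [setIntegral_univ_pi_succ _ (integrableOn_signPrimitive_comp
      (isCompact_univ_pi fun _ => isCompact_Icc) k (by fun_prop))]
    simp only [Fin.sum_univ_succ, Fin.cons_zero, Fin.cons_succ, add_assoc,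
      integral_Icc_signPrimitive_mul_add k (hw 0), fwdDiff]
    rw [integral_const_mul, integral_sub (hint _) (hint _), ih (k + 1) (fun j => hw j.succ),
      ih (k + 1) (fun j => hw j.succ), Fin.prod_univ_succ]
    simp only [multiFwdDiff, fwdDiff, Fin.tail_def, Nat.add_right_comm k 1 m, ← Nat.add_assoc,
      mul_inv]
    ring

/-- **Lemma (explicit formula for `μ_n`).** For `n = d + 2 ≥ 2` and `ξ ∈ ℝⁿ` with
`ξ₁,…,ξ_{n-1}` all nonzero:
`μ_n(ξ) = (c_n / (ξ₁⋯ξ_{n-1})) ∑_{α ∈ {0,1}^{n-1}} (-1)^{|α|} g_n(ξ_n + ∑_j α_j ξ_j)`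
where `g_n(t) = |t| t^{n-2}`, `c_n = (-1)^{n+1}/(n-1)!` and `|α| = α₁ + ⋯ + α_{n-1}`. -/
theorem mu_explicit_formula (d : ℕ) (ξ : Fin (d + 2) → ℝ)
    (hξ : ∀ j : Fin (d + 1), ξ j.castSucc ≠ 0) :
    muSymbol (d + 1) ξ =
      ((-1 : ℝ) ^ (d + 1) / (Nat.factorial (d + 1) : ℝ)) /
          (∏ j : Fin (d + 1), ξ j.castSucc) *
        ∑ α : Fin (d + 1) → Bool,
          (-1 : ℝ) ^ (∑ j : Fin (d + 1), if α j then 1 else 0 : ℕ) *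
            (|ξ (Fin.last (d + 1)) + ∑ j : Fin (d + 1), if α j then ξ j.castSucc else 0| *
              (ξ (Fin.last (d + 1)) +
                ∑ j : Fin (d + 1), if α j then ξ j.castSucc else 0) ^ d) := by
  rw [muSymbol, ← signPrimitive_zero, setIntegral_univ_pi_Icc_signPrimitive 0 hξ,
    multiFwdDiff_eq_sum, zero_add]
  simp only [signPrimitive_succ, zsmul_eq_mul, Int.cast_pow, Int.cast_neg, Int.cast_one,
    mul_sum]
  refine sum_congr rfl fun α _ => ?_
  ring
end

section
/- Let n ≥ 2, let ψ be a smooth function supported in [−2, −1/2] ∪ [1/2, 2], and let φ be a smooth function supported in [−2^{−ℓ₀+1}, 2^{−ℓ₀+1}], where ℓ₀ is large enough that (n−1)·2^{−ℓ₀+1} < 1/2 (for example ℓ₀ ≥ 100 log n with n ≥ 2); write g_k(η) = g(2^{−k}η). Then the support of each summand μ_n(ξ) φ_k(ξ₁) ⋯ φ_k(ξ_{n-1}) ψ_k(ξ_n) is disjoint from every hyperplane {ξ ∈ ℝⁿ : α₁ξ₁ + ⋯ + α_{n-1}ξ_{n-1} + ξ_n = 0} with α ∈ {0,1}^{n-1},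 and the function m(ξ) = ∑_{k ∈ ℤ} μ_n(ξ) φ_k(ξ₁) ⋯ φ_k(ξ_{n-1}) ψ_k(ξ_n) is a standard smooth symbol on ℝⁿ. -/
open MeasureTheory

/-- A bounded function `m ∈ C^∞(ℝⁿ ∖ {0})` is a standard smooth symbol if all its
derivatives satisfy `|∂^α m(ξ)| ≤ c_α |ξ|^{-|α|}` away from the origin
(real-valued version). -/
def IsStandardSymbolR (n : ℕ) (m : (Fin n → ℝ) → ℝ) : Prop :=
  (∃ C : ℝ, ∀ ξ, |m ξ| ≤ C) ∧
  ContDiffOn ℝ (⊤ : ℕ∞) m {(0 : Fin n → ℝ)}ᶜ ∧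
  ∀ k : ℕ, ∃ c : ℝ, 0 < c ∧ ∀ ξ : Fin n → ℝ, ξ ≠ 0 →
    ‖iteratedFDerivWithin ℝ k m {(0 : Fin n → ℝ)}ᶜ ξ‖ ≤ c * ‖ξ‖ ^ (-(k : ℝ))

/-!
On the support of the `k`-th summand, `|ξ_j| ≤ 2^{k-ℓ₀+1}` for `j < n` and `|ξ_n| ≥ 2^{k-1}`,
so `∑_{j<n} |ξ_j| < |ξ_n|`. Then every `α₁ξ₁ + ⋯ + α_{n-1}ξ_{n-1} + ξ_n` with `α ∈ [0,1]^{n-1}`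
has the sign of `ξ_n`, and in particular `μ_n(ξ) = sgn ξ_n` there. So the `k`-th summand is
`F(2^{-k}ξ)` for `F(η) = φ(η₁) ⋯ φ(η_{n-1}) · sgn(η_n) ψ(η_n)` (`signedBump`), which is smooth
because `ψ` vanishes near `0`, and is supported in the annulus `1/2 ≤ |η| ≤ 2`.
Such a dyadic sum `∑_k F(2^{-k}ξ)` is locally finite away from the origin, hence smooth there, and
invariant under `ξ ↦ 2^j ξ`. Its derivatives of order `q` are bounded on the compact annulus
`1 ≤ |ξ| ≤ 2`, and rescaling by `2^j` gives `|∂^q m(ξ)| ≲ |ξ|^{-q}` everywhere.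
-/

open Filter Topology

section Scaling

variable {E G : Type*} [NormedAddCommGroup E] [NormedSpace ℝ E]
  [NormedAddCommGroup G] [NormedSpace ℝ G]

theorem norm_iteratedFDerivWithin_le_of_comp_smul_eq {f : E → G} {s : Set E}
    {n : WithTop ℕ∞} {i : ℕ} (hf : ContDiffOn ℝ n f s) (hi : i ≤ n) (hs : UniqueDiffOn ℝ s)
    {c : ℝ} (hsc : ∀ x, c • x ∈ s ↔ x ∈ s) (hfc : ∀ x, f (c • x) = f x) {x : E}
    (hx : x ∈ s) :
    ‖iteratedFDerivWithin ℝ i f s x‖ ≤ ‖iteratedFDerivWithin ℝ i f s (c • x)‖ * |c| ^ i := by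
  let g : E →L[ℝ] E := c • ContinuousLinearMap.id ℝ E
  have hpre : g ⁻¹' s = s := Set.ext hsc
  have hcomp : f ∘ g = f := funext hfc
  have key := g.iteratedFDerivWithin_comp_right hf hs (by rwa [hpre]) ((hsc x).2 hx) hi
  rw [hcomp, hpre] at key
  rw [key]
  refine (ContinuousMultilinearMap.norm_compContinuousLinearMap_le _ _).trans ?_
  have hg : ‖g‖ ≤ |c| := by
    refine ContinuousLinearMap.opNorm_le_bound g (abs_nonneg c) fun y => ?_
    simp [g, norm_smul]
  rw [Finset.prod_const, Finset.card_univ, Fintype.card_fin]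
  exact mul_le_mul_of_nonneg_left (pow_le_pow_left₀ (norm_nonneg g) hg i) (norm_nonneg _)

theorem norm_iteratedFDerivWithin_le_of_zpow_smul_invariant [FiniteDimensional ℝ E]
    {m : E → G} (hm : ContDiffOn ℝ (⊤ : ℕ∞) m {0}ᶜ)
    (hinv : ∀ (j : ℤ) (ξ : E), m ((2 : ℝ) ^ j • ξ) = m ξ) (q : ℕ) :
    ∃ c : ℝ, 0 < c ∧ ∀ ξ : E, ξ ≠ 0 →
      ‖iteratedFDerivWithin ℝ q m {0}ᶜ ξ‖ ≤ c * ‖ξ‖ ^ (-(q : ℝ)) := by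
  have hs : UniqueDiffOn ℝ ({0}ᶜ : Set E) := isOpen_compl_singleton.uniqueDiffOn
  let A : Set E := {x | 1 ≤ ‖x‖} ∩ Metric.closedBall 0 2
  have hA : IsCompact A :=
    (isCompact_closedBall 0 2).inter_left (isClosed_le continuous_const continuous_norm)
  have hAs : A ⊆ {0}ᶜ := fun x hx => norm_pos_iff.1 (one_pos.trans_le hx.1)
  obtain ⟨C, hC⟩ := hA.exists_bound_of_continuousOn
    ((hm.continuousOn_iteratedFDerivWithin (m := q) (by exact_mod_cast le_top) hs).mono hAs)
  refine ⟨max C 1 * 2 ^ q, by positivity, fun ξ hξ => ?_⟩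
  have hρ : 0 < ‖ξ‖ := norm_pos_iff.2 hξ
  obtain ⟨L, hL1, hL2⟩ := exists_mem_Ico_zpow hρ one_lt_two
  have ht : (0 : ℝ) < 2 ^ (-L) := zpow_pos two_pos _
  have htξ : ‖(2 : ℝ) ^ (-L) • ξ‖ = 2 ^ (-L) * ‖ξ‖ := by
    rw [norm_smul, Real.norm_of_nonneg ht.le]
  have hmem : (2 : ℝ) ^ (-L) • ξ ∈ A := by
    refine ⟨Set.mem_ofPred.2 ?_, mem_closedBall_zero_iff.2 ?_⟩ <;>
      rw [htξ, zpow_neg, inv_mul_eq_div]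
    · exact (one_le_div₀ (zpow_pos two_pos _)).2 hL1
    · rw [div_le_iff₀ (zpow_pos two_pos _), ← zpow_one_add₀ two_ne_zero, add_comm]
      exact hL2.le
  have hscale : (2 : ℝ) ^ (-L) ≤ 2 / ‖ξ‖ := by
    rw [le_div_iff₀ hρ, ← htξ]
    exact mem_closedBall_zero_iff.1 hmem.2
  calc ‖iteratedFDerivWithin ℝ q m {0}ᶜ ξ‖
      ≤ ‖iteratedFDerivWithin ℝ q m {0}ᶜ ((2 : ℝ) ^ (-L) • ξ)‖ * |(2 : ℝ) ^ (-L)| ^ q :=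
        norm_iteratedFDerivWithin_le_of_comp_smul_eq hm (by exact_mod_cast le_top) hs
          (fun x => smul_ne_zero_iff_right ht.ne') (hinv (-L)) hξ
    _ ≤ max C 1 * (2 / ‖ξ‖) ^ q := by
        rw [abs_of_pos ht]
        gcongr
        exact (hC _ hmem).trans (le_max_left _ _)
    _ = max C 1 * 2 ^ q * ‖ξ‖ ^ (-(q : ℝ)) := by
        rw [Real.rpow_neg hρ.le, Real.rpow_natCast, div_pow, div_eq_mul_inv, mul_assoc]

end Scaling

theorem isStandardSymbolR_of_zpow_smul_invariant {n : ℕ} {m : (Fin n → ℝ) → ℝ}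
    (hm : ContDiffOn ℝ (⊤ : ℕ∞) m {0}ᶜ)
    (hinv : ∀ (j : ℤ) (ξ : Fin n → ℝ), m ((2 : ℝ) ^ j • ξ) = m ξ) :
    IsStandardSymbolR n m := by
  have hbound := norm_iteratedFDerivWithin_le_of_zpow_smul_invariant hm hinv
  refine ⟨?_, hm, hbound⟩
  obtain ⟨c, -, hc⟩ := hbound 0
  refine ⟨max c |m 0|, fun ξ => ?_⟩
  rcases eq_or_ne ξ 0 with rfl | hξ
  · exact le_max_right _ _
  · have := hc ξ hξ
    rw [norm_iteratedFDerivWithin_zero, Real.norm_eq_abs] at this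
    simpa using this.trans (le_max_left _ _)

section DyadicSum

variable {E G : Type*} [NormedAddCommGroup E] [NormedSpace ℝ E] [NormedAddCommGroup G]

noncomputable def dyadicSum (F : E → G) (ξ : E) : G :=
  ∑' k : ℤ, F ((2 : ℝ) ^ (-k) • ξ)

theorem dyadicSum_zpow_smul (F : E → G) (j : ℤ) (ξ : E) :
    dyadicSum F ((2 : ℝ) ^ j • ξ) = dyadicSum F ξ := by
  have hterm : ∀ k : ℤ, F ((2 : ℝ) ^ (-k) • (2 : ℝ) ^ j • ξ) = F ((2 : ℝ) ^ (-(k - j)) • ξ) :=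
    fun k => by rw [smul_smul, ← zpow_add₀ two_ne_zero, neg_sub, sub_eq_neg_add]
  simp only [dyadicSum, hterm]
  exact (Equiv.subRight j).tsum_eq fun k => F ((2 : ℝ) ^ (-k) • ξ)

theorem mem_Icc_log_of_zpow_mul_mem_Icc {a b x : ℝ} (ha : 0 < a) (hx : 0 < x) {k : ℤ}
    (h₁ : a ≤ 2 ^ (-k) * x) (h₂ : 2 ^ (-k) * x ≤ b) :
    k ∈ Finset.Icc (-Int.log 2 (b / x)) (Int.log 2 (x / a)) := by
  have hb : 0 < b := ha.trans_le (h₁.trans h₂)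
  rw [Finset.mem_Icc, neg_le]
  constructor
  · rw [← Int.zpow_le_iff_le_log one_lt_two (div_pos hb hx), Nat.cast_ofNat, le_div_iff₀ hx]
    exact h₂
  · rw [← Int.zpow_le_iff_le_log one_lt_two (div_pos hx ha), Nat.cast_ofNat, le_div_iff₀ ha]
    rwa [zpow_neg, inv_mul_eq_div, le_div_iff₀ (zpow_pos two_pos _), mul_comm] at h₁

variable {F : E → G} {a b : ℝ}

theorem eventually_dyadicSum_eq_sum (hF : ∀ ξ, F ξ ≠ 0 → a ≤ ‖ξ‖ ∧ ‖ξ‖ ≤ b) (ha : 0 < a)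
    {ξ₀ : E} (hξ₀ : ξ₀ ≠ 0) :
    ∃ S : Finset ℤ, ∀ᶠ ξ in 𝓝 ξ₀, dyadicSum F ξ = ∑ k ∈ S, F ((2 : ℝ) ^ (-k) • ξ) := by
  have hr : 0 < ‖ξ₀‖ := norm_pos_iff.2 hξ₀
  refine ⟨Finset.Icc (-Int.log 2 (b / (‖ξ₀‖ / 2))) (Int.log 2 (2 * ‖ξ₀‖ / a)), ?_⟩
  filter_upwards [Metric.ball_mem_nhds ξ₀ (half_pos hr)] with ξ hξ
  have hdist := abs_le.1 ((abs_norm_sub_norm_le ξ ξ₀).trans (mem_ball_iff_norm.1 hξ).le)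
  have hlow : ‖ξ₀‖ / 2 ≤ ‖ξ‖ := by linarith
  have hup : ‖ξ‖ ≤ 2 * ‖ξ₀‖ := by linarith
  refine tsum_eq_sum fun k hk => by_contra fun hne => hk ?_
  obtain ⟨h₁, h₂⟩ := hF _ hne
  rw [norm_smul, Real.norm_of_nonneg (zpow_pos two_pos _).le] at h₁ h₂
  have hξ : 0 < ‖ξ‖ := (half_pos hr).trans_le hlow
  have hk := Finset.mem_Icc.1 (mem_Icc_log_of_zpow_mul_mem_Icc ha hξ h₁ h₂)
  have hb : 0 < b := ha.trans_le (h₁.trans h₂)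
  refine Finset.mem_Icc.2 ⟨(neg_le_neg (Int.log_mono_right ?_ ?_)).trans hk.1,
    hk.2.trans (Int.log_mono_right ?_ ?_)⟩
  · exact div_pos hb hξ
  · exact div_le_div_of_nonneg_left hb.le (half_pos hr) hlow
  · exact div_pos hξ ha
  · exact div_le_div_of_nonneg_right hup ha.le

theorem contDiffOn_dyadicSum [NormedSpace ℝ G] {n : WithTop ℕ∞} (hFd : ContDiff ℝ n F)
    (hF : ∀ ξ, F ξ ≠ 0 → a ≤ ‖ξ‖ ∧ ‖ξ‖ ≤ b) (ha : 0 < a) :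
    ContDiffOn ℝ n (dyadicSum F) {0}ᶜ := by
  intro ξ₀ hξ₀
  obtain ⟨S, hS⟩ := eventually_dyadicSum_eq_sum hF ha hξ₀
  have hsum : ContDiff ℝ n fun ξ => ∑ k ∈ S, F ((2 : ℝ) ^ (-k) • ξ) :=
    ContDiff.sum fun k _ => hFd.comp (contDiff_const_smul _)
  exact (hsum.contDiffAt.congr_of_eventuallyEq hS).contDiffWithinAt

end DyadicSum

theorem isStandardSymbolR_dyadicSum {n : ℕ} {F : (Fin n → ℝ) → ℝ} {a b : ℝ}
    (hFd : ContDiff ℝ (⊤ : ℕ∞) F) (hF : ∀ ξ, F ξ ≠ 0 → a ≤ ‖ξ‖ ∧ ‖ξ‖ ≤ b) (ha : 0 < a) :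
    IsStandardSymbolR n (dyadicSum F) :=
  isStandardSymbolR_of_zpow_smul_invariant (contDiffOn_dyadicSum hFd hF ha)
    (dyadicSum_zpow_smul F)

theorem Real.sign_mul_of_pos {c : ℝ} (hc : 0 < c) (x : ℝ) : Real.sign (c * x) = Real.sign x := by
  rcases lt_trichotomy x 0 with hx | rfl | hx
  · rw [Real.sign_of_neg hx, Real.sign_of_neg (mul_neg_of_pos_of_neg hc hx)]
  · rw [mul_zero]
  · rw [Real.sign_of_pos hx, Real.sign_of_pos (mul_pos hc hx)]

theorem Real.sign_add_of_abs_lt {a b : ℝ} (h : |a| < |b|) : Real.sign (a + b) = Real.sign b := by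
  obtain ⟨h₁, h₂⟩ := abs_lt.1 h
  rcases lt_abs.1 (lt_of_le_of_lt (abs_nonneg a) h) with hb | hb
  · rw [abs_of_pos (by linarith : 0 < b)] at h₁
    rw [Real.sign_of_pos (by linarith : 0 < a + b), Real.sign_of_pos (by linarith)]
  · rw [abs_of_neg (by linarith : b < 0)] at h₂
    rw [Real.sign_of_neg (by linarith : a + b < 0), Real.sign_of_neg (by linarith)]

theorem add_ne_zero_of_abs_lt {a b : ℝ} (h : |a| < |b|) : a + b ≠ 0 := fun hab => by
  rw [eq_neg_of_add_eq_zero_left hab, abs_neg] at h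
  exact lt_irrefl _ h

theorem abs_sum_mul_le_sum_abs {ι : Type*} (s : Finset ι) {α x : ι → ℝ}
    (hα : ∀ i ∈ s, α i ∈ Set.Icc 0 1) : |∑ i ∈ s, α i * x i| ≤ ∑ i ∈ s, |x i| := by
  refine (Finset.abs_sum_le_sum_abs _ _).trans (Finset.sum_le_sum fun i hi => ?_)
  rw [abs_mul, abs_of_nonneg (hα i hi).1]
  exact mul_le_of_le_one_left (abs_nonneg _) (hα i hi).2

theorem muSymbol_eq_sign {m : ℕ} {ξ : Fin (m + 1) → ℝ}
    (h : ∑ j : Fin m, |ξ j.castSucc| < |ξ (Fin.last m)|) :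
    muSymbol m ξ = Real.sign (ξ (Fin.last m)) := by
  have hsign : ∀ α ∈ Set.univ.pi fun _ : Fin m => Set.Icc (0 : ℝ) 1,
      Real.sign ((∑ j, α j * ξ j.castSucc) + ξ (Fin.last m)) = Real.sign (ξ (Fin.last m)) :=
    fun α hα => Real.sign_add_of_abs_lt
      ((abs_sum_mul_le_sum_abs _ fun j _ => hα j trivial).trans_lt h)
  rw [muSymbol, setIntegral_congr_fun (MeasurableSet.univ_pi fun _ => measurableSet_Icc) hsign,
    setIntegral_const, measureReal_def, volume_pi_pi]
  simp [Real.volume_Icc]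

theorem contDiff_sign_mul {ψ : ℝ → ℝ} {n : WithTop ℕ∞} (hψ : ContDiff ℝ n ψ)
    (h₀ : ψ =ᶠ[𝓝 0] 0) : ContDiff ℝ n fun t => Real.sign t * ψ t := by
  refine contDiff_iff_contDiffAt.2 fun x => ?_
  rcases lt_trichotomy x 0 with hx | rfl | hx
  · refine hψ.neg.contDiffAt.congr_of_eventuallyEq ?_
    filter_upwards [Iio_mem_nhds hx] with t ht
    rw [Real.sign_of_neg ht, neg_one_mul]
  · refine (contDiffAt_const (c := (0 : ℝ))).congr_of_eventuallyEq ?_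
    filter_upwards [h₀] with t ht
    rw [ht, Pi.zero_apply, mul_zero]
  · refine hψ.contDiffAt.congr_of_eventuallyEq ?_
    filter_upwards [Ioi_mem_nhds hx] with t ht
    rw [Real.sign_of_pos ht, one_mul]

theorem abs_mem_Icc_of_tsupport_subset {ψ : ℝ → ℝ} {a b t : ℝ} (ha : 0 ≤ a)
    (h : tsupport ψ ⊆ Set.Icc (-b) (-a) ∪ Set.Icc a b) (ht : ψ t ≠ 0) :
    a ≤ |t| ∧ |t| ≤ b := by
  rcases h (subset_tsupport ψ ht) with ⟨h₁, h₂⟩ | ⟨h₁, h₂⟩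
  · exact ⟨le_abs.2 (Or.inr (by linarith)), abs_le.2 ⟨h₁, by linarith⟩⟩
  · exact ⟨le_abs.2 (Or.inl h₁), abs_le.2 ⟨by linarith, h₂⟩⟩

section SignedBump

variable {d : ℕ} {φ ψ : ℝ → ℝ} {a b δ : ℝ}

noncomputable def signedBump (d : ℕ) (φ ψ : ℝ → ℝ) (η : Fin (d + 2) → ℝ) : ℝ :=
  (∏ j : Fin (d + 1), φ (η j.castSucc)) *
    (Real.sign (η (Fin.last (d + 1))) * ψ (η (Fin.last (d + 1))))

theorem contDiff_signedBump {n : WithTop ℕ∞} (hφ : ContDiff ℝ n φ) (hψ : ContDiff ℝ n ψ)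
    (h₀ : ψ =ᶠ[𝓝 0] 0) : ContDiff ℝ n (signedBump d φ ψ) :=
  (contDiff_prod fun j _ => hφ.comp (contDiff_apply ℝ ℝ j.castSucc)).mul
    ((contDiff_sign_mul hψ h₀).comp (contDiff_apply ℝ ℝ (Fin.last (d + 1))))

theorem norm_mem_Icc_of_signedBump_ne_zero (hφ : ∀ t, φ t ≠ 0 → |t| ≤ b)
    (hψ : ∀ t, ψ t ≠ 0 → a ≤ |t| ∧ |t| ≤ b) {η : Fin (d + 2) → ℝ}
    (h : signedBump d φ ψ η ≠ 0) : a ≤ ‖η‖ ∧ ‖η‖ ≤ b := by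
  have hφη := Finset.prod_ne_zero_iff.1 (left_ne_zero_of_mul h)
  obtain ⟨ha, hb⟩ := hψ _ (right_ne_zero_of_mul (right_ne_zero_of_mul h))
  refine ⟨ha.trans (norm_le_pi_norm η _),
    (pi_norm_le_iff_of_nonneg ((abs_nonneg _).trans hb)).2 fun i => ?_⟩
  rw [Real.norm_eq_abs]
  induction i using Fin.lastCases with
  | last => exact hb
  | cast j => exact hφ _ (hφη j (Finset.mem_univ j))

theorem sum_abs_lt_abs_last (hφ : ∀ t, φ t ≠ 0 → |t| ≤ δ) (hψ : ∀ t, ψ t ≠ 0 → a ≤ |t|)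
    (hδ : ((d : ℝ) + 1) * δ < a) {c : ℝ} (hc : 0 < c) {ξ : Fin (d + 2) → ℝ}
    (hφξ : ∀ j : Fin (d + 1), φ (c * ξ j.castSucc) ≠ 0)
    (hψξ : ψ (c * ξ (Fin.last (d + 1))) ≠ 0) :
    ∑ j : Fin (d + 1), |ξ j.castSucc| < |ξ (Fin.last (d + 1))| := by
  refine lt_of_mul_lt_mul_left ?_ hc.le
  calc c * ∑ j : Fin (d + 1), |ξ j.castSucc|
      = ∑ j : Fin (d + 1), |c * ξ j.castSucc| := by
        rw [Finset.mul_sum]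
        simp only [abs_mul, abs_of_pos hc]
    _ ≤ ∑ _j : Fin (d + 1), δ := Finset.sum_le_sum fun j _ => hφ _ (hφξ j)
    _ = ((d : ℝ) + 1) * δ := by simp
    _ < a := hδ
    _ ≤ |c * ξ (Fin.last (d + 1))| := hψ _ hψξ
    _ = c * |ξ (Fin.last (d + 1))| := by rw [abs_mul, abs_of_pos hc]

theorem summand_eq_signedBump (hφ : ∀ t, φ t ≠ 0 → |t| ≤ δ) (hψ : ∀ t, ψ t ≠ 0 → a ≤ |t|)
    (hδ : ((d : ℝ) + 1) * δ < a) (k : ℤ) (ξ : Fin (d + 2) → ℝ) :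
    muSymbol (d + 1) ξ * (∏ j : Fin (d + 1), φ ((2 : ℝ) ^ (-k) * ξ j.castSucc)) *
      ψ ((2 : ℝ) ^ (-k) * ξ (Fin.last (d + 1))) = signedBump d φ ψ ((2 : ℝ) ^ (-k) • ξ) := by
  have hc : (0 : ℝ) < 2 ^ (-k) := zpow_pos two_pos _
  simp only [signedBump, Pi.smul_apply, smul_eq_mul]
  by_cases hφξ : ∀ j : Fin (d + 1), φ ((2 : ℝ) ^ (-k) * ξ j.castSucc) ≠ 0
  · by_cases hψξ : ψ ((2 : ℝ) ^ (-k) * ξ (Fin.last (d + 1))) = 0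
    · rw [hψξ, mul_zero, mul_zero, mul_zero]
    · rw [muSymbol_eq_sign (sum_abs_lt_abs_last hφ hψ hδ hc hφξ hψξ), Real.sign_mul_of_pos hc]
      ring
  · obtain ⟨j, hj⟩ := not_forall_not.1 hφξ
    rw [Finset.prod_eq_zero (Finset.mem_univ j) hj, mul_zero, zero_mul, zero_mul]

end SignedBump

/-- **Lemma (the smooth `ψ`-`φ` case).** Let `n = d + 2 ≥ 2`, let `ψ` be a smooth function
supported in `[-2,-1/2] ∪ [1/2,2]` and let `φ` be a smooth function supported in
`[-2^{-ℓ₀+1}, 2^{-ℓ₀+1}]`, where `ℓ₀` is so large that `(n-1)·2^{-ℓ₀+1} < 1/2`. Then the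
support of each summand `μ_n(ξ) φ(2^{-k}ξ₁) ⋯ φ(2^{-k}ξ_{n-1}) ψ(2^{-k}ξ_n)` is disjoint
from every hyperplane `{ξ : α₁ξ₁ + ⋯ + α_{n-1}ξ_{n-1} + ξ_n = 0}` with `α ∈ {0,1}^{n-1}`,
and `m(ξ) = ∑_{k ∈ ℤ} μ_n(ξ) φ(2^{-k}ξ₁) ⋯ φ(2^{-k}ξ_{n-1}) ψ(2^{-k}ξ_n)` is a standard
smooth symbol on `ℝⁿ`. -/
theorem smooth_psi_phi_case
    (d : ℕ) (ψ φ : ℝ → ℝ) (ℓ₀ : ℕ)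
    (hℓ₀ : ((d : ℝ) + 1) * (2:ℝ) ^ (-(ℓ₀ : ℤ) + 1) < 1/2)
    (hψ : ContDiff ℝ (⊤ : ℕ∞) ψ)
    (hψsupp : tsupport ψ ⊆ Set.Icc (-2 : ℝ) (-(1/2)) ∪ Set.Icc (1/2 : ℝ) 2)
    (hφ : ContDiff ℝ (⊤ : ℕ∞) φ)
    (hφsupp : tsupport φ ⊆
      Set.Icc (-(2:ℝ) ^ (-(ℓ₀ : ℤ) + 1)) ((2:ℝ) ^ (-(ℓ₀ : ℤ) + 1))) :
    (∀ k : ℤ, ∀ ξ ∈ Function.support (fun ξ : Fin (d + 2) → ℝ =>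
        muSymbol (d + 1) ξ * (∏ j : Fin (d + 1), φ ((2:ℝ) ^ (-k) * ξ j.castSucc)) *
          ψ ((2:ℝ) ^ (-k) * ξ (Fin.last (d + 1)))),
      ∀ α : Fin (d + 1) → ℝ, (∀ j, α j = 0 ∨ α j = 1) →
        (∑ j : Fin (d + 1), α j * ξ j.castSucc) + ξ (Fin.last (d + 1)) ≠ 0) ∧
    IsStandardSymbolR (d + 2) (fun ξ =>
      ∑' k : ℤ, muSymbol (d + 1) ξ *
        (∏ j : Fin (d + 1), φ ((2:ℝ) ^ (-k) * ξ j.castSucc)) *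
        ψ ((2:ℝ) ^ (-k) * ξ (Fin.last (d + 1)))) := by
  have hφδ : ∀ t, φ t ≠ 0 → |t| ≤ 2 ^ (-(ℓ₀ : ℤ) + 1) :=
    fun t ht => abs_le.2 (hφsupp (subset_tsupport φ ht))
  have hψab : ∀ t, ψ t ≠ 0 → 1 / 2 ≤ |t| ∧ |t| ≤ 2 :=
    fun t ht => abs_mem_Icc_of_tsupport_subset one_half_pos.le hψsupp ht
  have hψa : ∀ t, ψ t ≠ 0 → 1 / 2 ≤ |t| := fun t ht => (hψab t ht).1
  refine ⟨fun k ξ hξ α hα => ?_, ?_⟩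
  · have hξ' := Function.mem_support.1 hξ
    refine add_ne_zero_of_abs_lt ((abs_sum_mul_le_sum_abs _ fun j _ => ?_).trans_lt
      (sum_abs_lt_abs_last hφδ hψa hℓ₀ (zpow_pos two_pos _)
        (fun j => Finset.prod_ne_zero_iff.1 (right_ne_zero_of_mul (left_ne_zero_of_mul hξ')) j
          (Finset.mem_univ j))
        (right_ne_zero_of_mul hξ')))
    rcases hα j with h | h <;> simp [h]
  · have hδ : (2 : ℝ) ^ (-(ℓ₀ : ℤ) + 1) ≤ 2 :=
      (zpow_le_zpow_right₀ one_le_two (by omega)).trans_eq (zpow_one 2)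
    have h₀ : ψ =ᶠ[𝓝 0] 0 := Metric.eventually_nhds_iff.2 ⟨1 / 2, one_half_pos,
      fun t ht => by_contra fun h => (hψa t h).not_gt (by rwa [Real.dist_0_eq_abs] at ht)⟩
    rw [show (fun ξ => _) = dyadicSum (signedBump d φ ψ) from
      funext fun ξ => tsum_congr fun k => summand_eq_signedBump hφδ hψa hℓ₀ k ξ]
    exact isStandardSymbolR_dyadicSum (contDiff_signedBump hφ hψ h₀)
      (fun η => norm_mem_Icc_of_signedBump_ne_zero (fun t ht => (hφδ t ht).trans hδ) hψab)
      one_half_pos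
end
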